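/- Let (β_k)_{k≥1} be a noise schedule with β_k ∈ (0,1), α_k = 1 − β_k, ᾱ_k = ∏_{s=1}^k α_s, and let f, y_0 ∈ ℝ. On a probability space, let (z_k)_{k≥1} be an i.i.d. sequence of standard real Gaussian random variables and define the CARD forward chain Y_0 := y_0, Y_k := √α_k Y_{k−1} + (1 − √α_k) f + √β_k z_k. Define the residual chain L_k := Y_k − f. Then for every k ≥ 1 the law of L_k equals the law of the standard DDPM forward chain started at l_0 := y_0 − f, i.e., the real Gaussian measure with mean √ᾱ_k · (y_0 − f) and variance 1 − ᾱ_k. -/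

import Mathlib

open MeasureTheory ProbabilityTheory
open scoped NNReal

/-! The residual chain satisfies the DDPM recursion `L_k = √α_k L_{k-1} + √β_k z_k` started at
`y₀ - f`: the prior `f` cancels. Since `L_{k-1}` is a function of `z_1, …, z_{k-1}`, it is
independent of `z_k`, so by induction `L_k` is Gaussian with mean `√α_k √ᾱ_{k-1} (y₀ - f)` and
variance `α_k (1 - ᾱ_{k-1}) + β_k = 1 - ᾱ_k`. -/

section General

variable {Ω : Type*} {mΩ : MeasurableSpace Ω} {μ : Measure Ω}

lemma map_const_mul_add_const_mul_eq_gaussianReal {X Z : Ω → ℝ} (hXZ : IndepFun X Z μ)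
    {m m' : ℝ} {v w : ℝ≥0} (hX : μ.map X = gaussianReal m v) (hZ : μ.map Z = gaussianReal m' w)
    (a b : ℝ) {u : ℝ≥0} (hu : (u : ℝ) = a ^ 2 * v + b ^ 2 * w) :
    μ.map (fun ω ↦ a * X ω + b * Z ω) = gaussianReal (a * m + b * m') u := by
  have hXm : AEMeasurable X μ := .of_map_ne_zero (by simp [hX, NeZero.ne])
  have hZm : AEMeasurable Z μ := .of_map_ne_zero (by simp [hZ, NeZero.ne])
  convert gaussianReal_add_gaussianReal_of_indepFun
    (hXZ.comp (measurable_const_mul a) (measurable_const_mul b))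
    (gaussianReal_const_mul ⟨hXm, hX⟩ a).map_eq (gaussianReal_const_mul ⟨hZm, hZ⟩ b).map_eq
  · rfl
  · rw [← NNReal.coe_inj, hu]
    simp

lemma ProbabilityTheory.iIndepFun.indepFun_of_measurable_biSup {ι β γ : Type*}
    [MeasurableSpace β] [MeasurableSpace γ] {z : ι → Ω → β} (hz : iIndepFun z μ)
    (hzm : ∀ i, Measurable (z i)) {S : Set ι} {j : ι} (hj : j ∉ S) {X : Ω → γ}
    (hX : Measurable[⨆ i ∈ S, MeasurableSpace.comap (z i) inferInstance] X) :
    IndepFun X (z j) μ := by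
  have hSj := indep_iSup_of_disjoint (fun i ↦ (hzm i).comap_le)
    ((iIndepFun_iff_iIndep _ _ _).mp hz) (Set.disjoint_singleton_right.mpr hj)
  rw [IndepFun_iff_Indep]
  refine indep_of_indep_of_le_right (indep_of_indep_of_le_left hSj hX.comap_le) ?_
  exact le_biSup (fun i ↦ MeasurableSpace.comap (z i) inferInstance) (Set.mem_singleton j)

end General

section ResidualChain

variable {Ω : Type*} {mΩ : MeasurableSpace Ω} {μ : Measure Ω} {β : ℕ → ℝ} {l₀ : ℝ}
  {z : ℕ → Ω → ℝ} {L : ℕ → Ω → ℝ}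

lemma measurable_biSup_of_residual_recursion (hL0 : ∀ ω, L 0 ω = l₀)
    (hLrec : ∀ k ω, L (k + 1) ω = √(1 - β (k + 1)) * L k ω + √(β (k + 1)) * z (k + 1) ω)
    (k : ℕ) : Measurable[⨆ i ∈ Set.Iic k, MeasurableSpace.comap (z i) inferInstance] (L k) := by
  induction k with
  | zero => simp [funext hL0]
  | succ k ih =>
    have hmono : (⨆ i ∈ Set.Iic k, MeasurableSpace.comap (z i) inferInstance)
        ≤ ⨆ i ∈ Set.Iic (k + 1), MeasurableSpace.comap (z i) inferInstance :=
      biSup_mono fun i hi ↦ Set.mem_Iic.mpr (Nat.le_succ_of_le hi)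
    have hz : Measurable[⨆ i ∈ Set.Iic (k + 1), MeasurableSpace.comap (z i) inferInstance]
        (z (k + 1)) :=
      .of_comap_le (le_biSup (fun i ↦ MeasurableSpace.comap (z i) inferInstance) Set.self_mem_Iic)
    rw [funext (hLrec k)]
    exact ((ih.mono hmono le_rfl).const_mul _).add (hz.const_mul _)

lemma prod_one_sub_mem_Icc (hβ : ∀ k, β (k + 1) ∈ Set.Icc (0 : ℝ) 1) (k : ℕ) :
    ∏ s ∈ Finset.Icc 1 k, (1 - β s) ∈ Set.Icc (0 : ℝ) 1 := by
  have hmem : ∀ s ∈ Finset.Icc 1 k, 1 - β s ∈ Set.Icc (0 : ℝ) 1 := fun s hs ↦ by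
    obtain ⟨t, rfl⟩ := Nat.exists_eq_add_of_le' (Finset.mem_Icc.mp hs).1
    constructor <;> linarith [(hβ t).1, (hβ t).2]
  exact ⟨Finset.prod_nonneg fun s hs ↦ (hmem s hs).1,
    Finset.prod_le_one (fun s hs ↦ (hmem s hs).1) fun s hs ↦ (hmem s hs).2⟩

theorem map_residual_eq_gaussianReal [IsProbabilityMeasure μ]
    (hβ : ∀ k, β (k + 1) ∈ Set.Icc (0 : ℝ) 1)
    (hzm : ∀ k, Measurable (z k)) (hzlaw : ∀ k, μ.map (z k) = gaussianReal 0 1)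
    (hz : iIndepFun z μ) (hL0 : ∀ ω, L 0 ω = l₀)
    (hLrec : ∀ k ω, L (k + 1) ω = √(1 - β (k + 1)) * L k ω + √(β (k + 1)) * z (k + 1) ω)
    (k : ℕ) :
    μ.map (L k) = gaussianReal (√(∏ s ∈ Finset.Icc 1 k, (1 - β s)) * l₀)
      (Real.toNNReal (1 - ∏ s ∈ Finset.Icc 1 k, (1 - β s))) := by
  induction k with
  | zero => simp [funext hL0, Measure.map_const]
  | succ k ih =>
    set abar := ∏ s ∈ Finset.Icc 1 k, (1 - β s)
    have habar_succ : ∏ s ∈ Finset.Icc 1 (k + 1), (1 - β s) = abar * (1 - β (k + 1)) :=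
      Finset.prod_Icc_succ_top (Nat.le_add_left 1 k) _
    have hindep : IndepFun (L k) (z (k + 1)) μ :=
      hz.indepFun_of_measurable_biSup hzm (by simp)
        (measurable_biSup_of_residual_recursion hL0 hLrec k)
    obtain ⟨hβ0, hβ1⟩ := hβ k
    have habar1 : abar ≤ 1 := (prod_one_sub_mem_Icc hβ k).2
    rw [funext (hLrec k), habar_succ]
    refine map_const_mul_add_const_mul_eq_gaussianReal hindep ih (hzlaw _) _ _ ?_
      |>.trans (congrArg₂ _ ?_ rfl)
    · rw [Real.sq_sqrt (by linarith), Real.sq_sqrt hβ0, Real.coe_toNNReal _ (by nlinarith),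
        Real.coe_toNNReal _ (by linarith)]
      push_cast
      ring
    · rw [Real.sqrt_mul' _ (by linarith)]
      ring

end ResidualChain

/-- Forward-process half of the CARD–DMRR equivalence: the residual chain
`L_k = Y_k - f` of the CARD forward chain has the law of the standard DDPM
forward chain started at `l₀ = y₀ - f`, namely
`N(√ᾱ_k (y₀ - f), 1 - ᾱ_k)`. -/
theorem card_residual_chain_law_eq_ddpm
    {Ω : Type*} [MeasurableSpace Ω] (μ : Measure Ω) [IsProbabilityMeasure μ]
    (β : ℕ → ℝ) (hβ : ∀ k, 1 ≤ k → β k ∈ Set.Ioo (0 : ℝ) 1)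
    (f y₀ : ℝ)
    (z : ℕ → Ω → ℝ) (hzmeas : ∀ k, Measurable (z k))
    (hzlaw : ∀ k, Measure.map (z k) μ = gaussianReal 0 1)
    (hzindep : iIndepFun z μ)
    (Y : ℕ → Ω → ℝ)
    (hY0 : ∀ ω, Y 0 ω = y₀)
    (hYrec : ∀ k ω, Y (k + 1) ω =
      Real.sqrt (1 - β (k + 1)) * Y k ω + (1 - Real.sqrt (1 - β (k + 1))) * f
        + Real.sqrt (β (k + 1)) * z (k + 1) ω)
    (L : ℕ → Ω → ℝ) (hL : ∀ k ω, L k ω = Y k ω - f)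
    (abar : ℕ → ℝ)
    (habar : ∀ k, abar k = ∏ s ∈ Finset.Icc 1 k, (1 - β s)) :
    ∀ k, 1 ≤ k →
      Measure.map (L k) μ
        = gaussianReal (Real.sqrt (abar k) * (y₀ - f))
            (Real.toNNReal (1 - abar k)) := by
  intro k _
  have hβ' : ∀ k, β (k + 1) ∈ Set.Icc (0 : ℝ) 1 :=
    fun k ↦ Set.Ioo_subset_Icc_self (hβ (k + 1) k.succ_pos)
  have hL0 : ∀ ω, L 0 ω = y₀ - f := fun ω ↦ by rw [hL, hY0]
  have hLrec : ∀ k ω, L (k + 1) ω = √(1 - β (k + 1)) * L k ω + √(β (k + 1)) * z (k + 1) ω :=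
    fun k ω ↦ by rw [hL, hL, hYrec]; ring
  rw [habar]
  exact map_residual_eq_gaussianReal hβ' hzmeas hzlaw hzindep hL0 hLrec k
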